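/- Let X be a random variable taking four values indexed by bits (r,y) ∈ {0,1}², encoded into the four qutrit pure states ±a|0⟩ ± b|1⟩ + c|2⟩ (signs: (+,+) for (0,0), (+,−) for (0,1), (−,−) for (1,0), (−,+) for (1,1)) with a,b,c real and a²+b²+c²=1. Then the Holevo quantity of this ensemble with uniform prior, χ = S(ρ̄) − (1/4)Σ S(ρ_j) where ρ̄ = a²|0⟩⟨0| + b²|1⟩⟨1| + c²|2⟩⟨2|, satisfies χ = −a²log₂a² − b²log₂b² − c²log₂c² ≤ log₂3, and the accessible information obtainable by any POVM measurement on the qutrit is at most 1 bit. -/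

import Mathlib

open Matrix
open scoped ComplexOrder

/-- The four qutrit signal states `±a|0⟩ ± b|1⟩ + c|2⟩` indexed by `(r,y)`:
signs of the `|0⟩`-coefficient: `(-1)^r`; of the `|1⟩`-coefficient: `(-1)^(r+y)`. -/
noncomputable def sigVec (a b c : ℝ) (j : Fin 2 × Fin 2) : Fin 3 → ℂ :=
  ![(-1 : ℂ) ^ (j.1 : ℕ) * a, (-1 : ℂ) ^ ((j.1 : ℕ) + (j.2 : ℕ)) * b, (c : ℂ)]

/-- The corresponding density matrices `|ψ_j⟩⟨ψ_j|`. -/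
noncomputable def sigDM (a b c : ℝ) (j : Fin 2 × Fin 2) :
    Matrix (Fin 3) (Fin 3) ℂ :=
  Matrix.of fun i k => sigVec a b c j i * star (sigVec a b c j k)

/-- Shannon entropy (base 2) of a finitely supported nonnegative weight
function, with the convention `0·log₂0 = 0` (built into `Real.logb`). -/
noncomputable def shannonH {ι : Type*} [Fintype ι] (p : ι → ℝ) : ℝ :=
  -∑ i, p i * Real.logb 2 (p i)

/-!
The first claim is Gibbs' inequality against the uniform distribution on three points.

For the second, the input is uniform, so `H(J) = 2` bits and it suffices to show `H(J | K) ≥ 1`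
bit. Conditioned on an outcome with POVM element `M = B*B`, the unnormalized distribution of `j`
is `¼ ⟨ψ_j|M|ψ_j⟩ = ∑ (σ_j ⬝ w)²`, a sum over the rows of `B` (real and imaginary parts) of
squares of signed sums, `σ_j` being the sign pattern of `ψ_j`. Mass-weighted entropy is
superadditive, so it suffices that each single term `q_j = (σ_j ⬝ w)²` has entropy at least one
bit. By the chain rule its entropy splits into three binary entropies; bounding each by
`h(p) ≥ 4 p (1 - p)` bits leaves a rational inequality whose defect is a perfect square.
-/

open Real Set

namespace Real

lemma mul_log_sub_log_le_sub {x y : ℝ} (hx : 0 ≤ x) (hy : 0 < y) :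
    x * (log y - log x) ≤ y - x := by
  rcases hx.eq_or_lt with rfl | hx
  · simpa using hy.le
  have := log_le_sub_one_of_pos (div_pos hy hx)
  rw [log_div hy.ne' hx.ne'] at this
  calc x * (log y - log x) ≤ x * (y / x - 1) := by gcongr
    _ = y - x := by field_simp

lemma mul_log_sub_log_add_mul_log_sub_log_le {a b A B : ℝ} (ha : 0 ≤ a) (hb : 0 ≤ b)
    (hA : 0 < A) (hB : 0 < B) :
    a * (log A - log a) + b * (log B - log b) ≤ (a + b) * (log (A + B) - log (a + b)) := by
  rcases (add_nonneg ha hb).eq_or_lt with hs | hs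
  · obtain rfl : a = 0 := by linarith
    obtain rfl : b = 0 := by linarith
    simp
  -- Compare `a, b` with `A, B` rescaled to the total mass `a + b`.
  have hT : 0 < A + B := add_pos hA hB
  have hlog : ∀ {C}, 0 < C → log (C * (a + b) / (A + B)) = log C + log (a + b) - log (A + B) :=
    fun hC => by rw [log_div (by positivity) hT.ne', log_mul hC.ne' hs.ne']
  have hA' := mul_log_sub_log_le_sub ha (by positivity : 0 < A * (a + b) / (A + B))
  have hB' := mul_log_sub_log_le_sub hb (by positivity : 0 < B * (a + b) / (A + B))
  rw [hlog hA] at hA'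
  rw [hlog hB] at hB'
  have hsum : A * (a + b) / (A + B) + B * (a + b) / (A + B) = a + b := by field_simp
  linarith

noncomputable def binEntropyGap (p : ℝ) : ℝ := binEntropy p - 4 * log 2 * (p * (1 - p))

lemma hasDerivAt_binEntropyGap {p : ℝ} (hp₀ : p ≠ 0) (hp₁ : p ≠ 1) :
    HasDerivAt binEntropyGap (log (1 - p) - log p - 4 * log 2 * (1 - 2 * p)) p := by
  have hquad : HasDerivAt (fun p : ℝ => p * (1 - p)) (1 - 2 * p) p :=
    ((hasDerivAt_id' p).mul ((hasDerivAt_id' p).const_sub 1)).congr_deriv (by ring)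
  exact (hasDerivAt_binEntropy hp₀ hp₁).sub (hquad.const_mul _)

lemma hasDerivAt_deriv_binEntropyGap {p : ℝ} (hp₀ : 0 < p) (hp₁ : p < 1) :
    HasDerivAt (fun p => log (1 - p) - log p - 4 * log 2 * (1 - 2 * p))
      (8 * log 2 - (p * (1 - p))⁻¹) p := by
  have hlog₁ := ((hasDerivAt_id' p).const_sub 1).log (sub_ne_zero.mpr hp₁.ne')
  have hlin := (((hasDerivAt_id' p).const_mul 2).const_sub 1).const_mul (4 * log 2)
  refine ((hlog₁.sub (hasDerivAt_log hp₀.ne')).sub hlin).congr_deriv ?_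
  field_simp [sub_ne_zero.mpr hp₁.ne']
  ring

lemma exists_mul_one_sub_eq_inv_eight_log_two :
    ∃ c : ℝ, 0 < c ∧ c < 2⁻¹ ∧ c * (1 - c) = (8 * log 2)⁻¹ := by
  have hκ : (8 * log 2)⁻¹ < 4⁻¹ := by
    rw [inv_lt_inv₀ (by positivity) (by norm_num)]; linarith [log_two_gt_d9]
  have hκ₀ : 0 < (8 * log 2)⁻¹ := by positivity
  set d := √(4⁻¹ - (8 * log 2)⁻¹)
  have hd : d ^ 2 = 4⁻¹ - (8 * log 2)⁻¹ := sq_sqrt (by linarith)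
  have hd₀ : 0 < d := sqrt_pos.mpr (by linarith)
  refine ⟨2⁻¹ - d, ?_, by linarith, by linear_combination -hd⟩
  nlinarith

lemma antitoneOn_binEntropyGap {c : ℝ} (hc₀ : 0 < c) (hc : (8 * log 2)⁻¹ ≤ c * (1 - c)) :
    AntitoneOn binEntropyGap (Icc c 2⁻¹) := by
  have hmem : ∀ x ∈ Icc c 2⁻¹, 0 < x ∧ x < 1 := fun x hx => ⟨hc₀.trans_le hx.1, by linarith [hx.2]⟩
  have hf' : ∀ x ∈ Icc c 2⁻¹, HasDerivAt binEntropyGap _ x := fun x hx =>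
    hasDerivAt_binEntropyGap (hmem x hx).1.ne' (hmem x hx).2.ne
  have hf'' : ∀ x ∈ Icc c 2⁻¹, HasDerivAt _ _ x := fun x hx =>
    hasDerivAt_deriv_binEntropyGap (hmem x hx).1 (hmem x hx).2
  have hf'_mono : MonotoneOn (fun p => log (1 - p) - log p - 4 * log 2 * (1 - 2 * p))
      (Icc c 2⁻¹) := by
    refine monotoneOn_of_hasDerivWithinAt_nonneg (convex_Icc _ _)
      (fun x hx => (hf'' x hx).continuousAt.continuousWithinAt)
      (fun x hx => (hf'' x (interior_subset hx)).hasDerivWithinAt) fun x hx => ?_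
    rw [interior_Icc] at hx
    have hx₀ := hc₀.trans hx.1
    have hκx : (8 * log 2)⁻¹ ≤ x * (1 - x) := hc.trans (by nlinarith [hx.1, hx.2])
    have := inv_anti₀ (by positivity) hκx
    rw [inv_inv] at this
    linarith
  refine antitoneOn_of_hasDerivWithinAt_nonpos (convex_Icc _ _)
    (fun x hx => (hf' x hx).continuousAt.continuousWithinAt)
    (fun x hx => (hf' x (interior_subset hx)).hasDerivWithinAt) fun x hx => ?_
  have hx := interior_subset hx
  have hhalf : log (1 - 2⁻¹) - log 2⁻¹ - 4 * log 2 * (1 - 2 * 2⁻¹) = 0 := by norm_num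
  exact hhalf ▸ hf'_mono hx ⟨hx.1.trans hx.2, le_rfl⟩ hx.2

lemma concaveOn_binEntropyGap {c : ℝ} (hc : c ≤ 2⁻¹) (hcκ : c * (1 - c) ≤ (8 * log 2)⁻¹) :
    ConcaveOn ℝ (Icc 0 c) binEntropyGap := by
  have hmem : ∀ x ∈ interior (Icc 0 c), 0 < x ∧ x < 1 := fun x hx => by
    rw [interior_Icc] at hx; exact ⟨hx.1, by linarith [hx.2]⟩
  refine concaveOn_of_hasDerivWithinAt2_nonpos (convex_Icc _ _)
    (by unfold binEntropyGap; fun_prop)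
    (fun x hx => (hasDerivAt_binEntropyGap (hmem x hx).1.ne' (hmem x hx).2.ne).hasDerivWithinAt)
    (fun x hx => (hasDerivAt_deriv_binEntropyGap (hmem x hx).1 (hmem x hx).2).hasDerivWithinAt)
    fun x hx => ?_
  obtain ⟨hx₀, hx₁⟩ := hmem x hx
  rw [interior_Icc] at hx
  have hxκ : x * (1 - x) ≤ (8 * log 2)⁻¹ := le_trans (by nlinarith [hx.1, hx.2]) hcκ
  have := inv_anti₀ (by nlinarith) hxκ
  rw [inv_inv] at this
  linarith

lemma binEntropyGap_zero : binEntropyGap 0 = 0 := by simp [binEntropyGap]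

lemma binEntropyGap_two_inv : binEntropyGap 2⁻¹ = 0 := by
  rw [binEntropyGap, binEntropy_two_inv]; ring

/-- The gap vanishes at `0` and `1/2`; it is concave on `[0, c]` and decreasing on `[c, 1/2]`,
where `c` is the zero of its second derivative `8 log 2 - 1 / (p (1 - p))`. -/
theorem four_mul_log_two_mul_le_binEntropy {p : ℝ} (hp₀ : 0 ≤ p) (hp₁ : p ≤ 1) :
    4 * log 2 * (p * (1 - p)) ≤ binEntropy p := by
  wlog hp : p ≤ 2⁻¹ generalizing p
  · have := this (p := 1 - p) (by linarith) (by linarith) (by linarith)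
    rwa [binEntropy_one_sub, sub_sub_cancel, mul_comm (1 - p)] at this
  suffices 0 ≤ binEntropyGap p by unfold binEntropyGap at this; linarith
  obtain ⟨c, hc₀, hc, hcκ⟩ := exists_mul_one_sub_eq_inv_eight_log_two
  have hright : ∀ x ∈ Icc c 2⁻¹, 0 ≤ binEntropyGap x := fun x hx =>
    binEntropyGap_two_inv ▸ antitoneOn_binEntropyGap hc₀ hcκ.ge hx ⟨hc.le, le_rfl⟩ hx.2
  rcases le_total p c with hpc | hcp
  · have := (concaveOn_binEntropyGap hc.le hcκ.le).ge_on_segment (x := 0) (y := c)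
      ⟨le_rfl, hc₀.le⟩ ⟨hc₀.le, le_rfl⟩ (by rw [segment_eq_Icc hc₀.le]; exact ⟨hp₀, hpc⟩)
    rw [binEntropyGap_zero] at this
    exact (le_min le_rfl (hright c ⟨le_rfl, hc.le⟩)).trans this
  · exact hright p ⟨hcp, hp⟩

end Real

section Entropy

open Finset

variable {ι : Type*} [Fintype ι]

lemma shannonH_eq_sum_negMulLog_div (p : ι → ℝ) :
    shannonH p = (∑ i, negMulLog (p i)) / log 2 := by
  simp only [shannonH, negMulLog, logb, Finset.sum_div, ← Finset.sum_neg_distrib]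
  congr 1 with i
  ring

lemma shannonH_le_logb_card (p : ι → ℝ) (hp : 0 ≤ p) (hp₁ : ∑ i, p i = 1) :
    shannonH p ≤ logb 2 (Fintype.card ι) := by
  obtain ⟨i₀, -, -⟩ := exists_ne_zero_of_sum_ne_zero (hp₁ ▸ one_ne_zero)
  have hn : (0 : ℝ) < Fintype.card ι := by have := Nonempty.intro i₀; positivity
  have key : ∑ i, negMulLog (p i) ≤ log (Fintype.card ι) :=
    calc ∑ i, negMulLog (p i)
        = log (Fintype.card ι) + ∑ i, p i * (log (Fintype.card ι)⁻¹ - log (p i)) := by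
          simp only [negMulLog, log_inv, mul_sub, sum_sub_distrib, ← sum_mul, hp₁, neg_mul,
            sum_neg_distrib]
          ring
      _ ≤ log (Fintype.card ι) + ∑ i, ((Fintype.card ι : ℝ)⁻¹ - p i) := by
          gcongr with i
          exact mul_log_sub_log_le_sub (hp i) (by positivity)
      _ = log (Fintype.card ι) := by
          simp [sum_sub_distrib, hp₁, hn.ne']
  rw [shannonH_eq_sum_negMulLog_div, logb]
  exact div_le_div_of_nonneg_right key (log_pos one_lt_two).le

/-- `(∑ q) · H(q / ∑ q)`: the entropy, in nats, of the normalization of `q`, weighted by the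
total mass of `q`. -/
noncomputable def unnormEntropy (q : ι → ℝ) : ℝ :=
  ∑ i, negMulLog (q i) - negMulLog (∑ i, q i)

lemma unnormEntropy_eq_sum_mul_log_sub (q : ι → ℝ) :
    unnormEntropy q = ∑ i, q i * (log (∑ j, q j) - log (q i)) := by
  simp only [unnormEntropy, negMulLog, mul_sub, sum_sub_distrib, ← sum_mul, neg_mul,
    sum_neg_distrib]
  ring

lemma unnormEntropy_fin_two {q : Fin 2 → ℝ} (hq : q 0 + q 1 ≠ 0) :
    unnormEntropy q = (q 0 + q 1) * binEntropy (q 0 / (q 0 + q 1)) := by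
  have hcompl : 1 - q 0 / (q 0 + q 1) = q 1 / (q 0 + q 1) := by field_simp; ring
  have hmul : ∀ x, negMulLog x = negMulLog ((q 0 + q 1) * (x / (q 0 + q 1))) := fun x => by
    rw [mul_div_cancel₀ _ hq]
  rw [binEntropy_eq_negMulLog_add_negMulLog_one_sub, hcompl, unnormEntropy, Fin.sum_univ_two,
    Fin.sum_univ_two, hmul (q 0), hmul (q 1), negMulLog_mul, negMulLog_mul]
  field_simp
  ring

lemma four_mul_log_two_mul_div_le_unnormEntropy {q : Fin 2 → ℝ} (hq : 0 ≤ q) :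
    4 * log 2 * (q 0 * q 1 / (q 0 + q 1)) ≤ unnormEntropy q := by
  have hq₀ : 0 ≤ q 0 := hq 0
  have hq₁ : 0 ≤ q 1 := hq 1
  rcases (add_nonneg hq₀ hq₁).eq_or_lt with hs | hs
  · obtain ⟨h₀, h₁⟩ : q 0 = 0 ∧ q 1 = 0 := ⟨by linarith, by linarith⟩
    simp [unnormEntropy, h₀, h₁]
  have hbin := four_mul_log_two_mul_le_binEntropy (p := q 0 / (q 0 + q 1)) (by positivity)
    (div_le_one_of_le₀ (by linarith) hs.le)
  have hcompl : 1 - q 0 / (q 0 + q 1) = q 1 / (q 0 + q 1) := by field_simp; ring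
  rw [hcompl] at hbin
  rw [unnormEntropy_fin_two hs.ne']
  calc 4 * log 2 * (q 0 * q 1 / (q 0 + q 1))
      = (q 0 + q 1) * (4 * log 2 * (q 0 / (q 0 + q 1) * (q 1 / (q 0 + q 1)))) := by
        field_simp
    _ ≤ _ := by gcongr

lemma unnormEntropy_add_le {q q' : ι → ℝ} (hq : 0 ≤ q) (hq' : 0 ≤ q') :
    unnormEntropy q + unnormEntropy q' ≤ unnormEntropy (q + q') := by
  rcases (sum_nonneg fun i _ => hq i).eq_or_lt with hQ | hQ
  · obtain rfl : q = 0 := funext fun i =>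
      (sum_eq_zero_iff_of_nonneg fun i _ => hq i).mp hQ.symm i (mem_univ i)
    simp [unnormEntropy]
  rcases (sum_nonneg fun i _ => hq' i).eq_or_lt with hQ' | hQ'
  · obtain rfl : q' = 0 := funext fun i =>
      (sum_eq_zero_iff_of_nonneg fun i _ => hq' i).mp hQ'.symm i (mem_univ i)
    simp [unnormEntropy]
  simp only [unnormEntropy_eq_sum_mul_log_sub, ← sum_add_distrib]
  refine sum_le_sum fun i _ => ?_
  simpa only [Pi.add_apply, sum_add_distrib] using
    mul_log_sub_log_add_mul_log_sub_log_le (hq i) (hq' i) hQ hQ'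

lemma unnormEntropy_prod {α β : Type*} [Fintype α] [Fintype β] (q : α × β → ℝ) :
    unnormEntropy q =
      unnormEntropy (fun a => ∑ b, q (a, b)) + ∑ a, unnormEntropy (fun b => q (a, b)) := by
  simp only [unnormEntropy, Fintype.sum_prod_type, sum_sub_distrib]
  ring

lemma shannonH_prod_sub_shannonH {α β : Type*} [Fintype α] [Fintype β] (p : α → β → ℝ) :
    shannonH (fun x : α × β => p x.1 x.2) - shannonH (fun b => ∑ a, p a b) =
      (∑ b, unnormEntropy (fun a => p a b)) / log 2 := by
  simp only [shannonH_eq_sum_negMulLog_div, unnormEntropy, Fintype.sum_prod_type, sum_sub_distrib]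
  rw [sum_comm, sub_div]

def entropyCone (ι : Type*) [Fintype ι] (κ : ℝ) : AddSubmonoid (ι → ℝ) where
  carrier := {q | 0 ≤ q ∧ κ * ∑ i, q i ≤ unnormEntropy q}
  zero_mem' := by simp [unnormEntropy]
  add_mem' := by
    rintro q q' ⟨hq, hκq⟩ ⟨hq', hκq'⟩
    refine ⟨add_nonneg hq hq', ?_⟩
    simp only [Pi.add_apply, sum_add_distrib, mul_add]
    linarith [unnormEntropy_add_le hq hq']

end Entropy

/-- The bound on a rank-one outcome, after the chain rule and the binary bound
`4 u v / (u + v) ≤ (u + v) h(u / (u + v))` (in bits) have been applied to the weights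
`((x + t)², (x - t)², (y - t)², (y + t)²)`. -/
lemma tetrahedral_sum_le_four_mul_harmonic (x y t : ℝ) :
    (x + t) ^ 2 + (x - t) ^ 2 + ((y - t) ^ 2 + (y + t) ^ 2) ≤
      4 * (((x + t) ^ 2 + (x - t) ^ 2) * ((y - t) ^ 2 + (y + t) ^ 2) /
          ((x + t) ^ 2 + (x - t) ^ 2 + ((y - t) ^ 2 + (y + t) ^ 2)) +
        (x + t) ^ 2 * (x - t) ^ 2 / ((x + t) ^ 2 + (x - t) ^ 2) +
        (y - t) ^ 2 * (y + t) ^ 2 / ((y - t) ^ 2 + (y + t) ^ 2)) := by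
  have hxsum : (x + t) ^ 2 + (x - t) ^ 2 = 2 * (x ^ 2 + t ^ 2) := by ring
  have hysum : (y - t) ^ 2 + (y + t) ^ 2 = 2 * (y ^ 2 + t ^ 2) := by ring
  have hxprod : (x + t) ^ 2 * (x - t) ^ 2 = (x ^ 2 - t ^ 2) ^ 2 := by ring
  have hyprod : (y - t) ^ 2 * (y + t) ^ 2 = (y ^ 2 - t ^ 2) ^ 2 := by ring
  rw [hxsum, hysum, hxprod, hyprod]
  rcases (by positivity : 0 ≤ x ^ 2 + t ^ 2).eq_or_lt with hP | hP
  · obtain rfl : x = 0 := by nlinarith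
    obtain rfl : t = 0 := by nlinarith
    rcases eq_or_ne y 0 with rfl | hy
    · simp
    · refine le_of_eq ?_
      field_simp
      ring
  rcases (by positivity : 0 ≤ y ^ 2 + t ^ 2).eq_or_lt with hQ | hQ
  · obtain rfl : y = 0 := by nlinarith
    obtain rfl : t = 0 := by nlinarith
    refine le_of_eq ?_
    field_simp
    ring
  rw [div_add_div _ _ (by positivity) (by positivity),
    div_add_div _ _ (by positivity) (by positivity), mul_div_assoc', le_div_iff₀ (by positivity)]
  -- the two sides differ by `8 (x²y² - t⁴)²` times positive factors
  nlinarith [sq_nonneg (x ^ 2 * y ^ 2 - t ^ 4), hP, hQ]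

def signPattern (j : Fin 2 × Fin 2) : Fin 3 → ℝ :=
  ![(-1) ^ (j.1 : ℕ), (-1) ^ ((j.1 : ℕ) + (j.2 : ℕ)), 1]

lemma sq_signPattern_dotProduct_mem_entropyCone (w : Fin 3 → ℝ) :
    (fun j => (signPattern j ⬝ᵥ w) ^ 2) ∈ entropyCone (Fin 2 × Fin 2) (log 2) := by
  set q := fun j => (signPattern j ⬝ᵥ w) ^ 2 with hq_def
  have hq : 0 ≤ q := fun j => sq_nonneg _
  refine ⟨hq, ?_⟩
  have hR := four_mul_log_two_mul_div_le_unnormEntropy (q := fun a => ∑ b, q (a, b))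
    fun a => Finset.sum_nonneg fun b _ => hq _
  have h₀ := four_mul_log_two_mul_div_le_unnormEntropy (q := fun b => q (0, b)) fun b => hq _
  have h₁ := four_mul_log_two_mul_div_le_unnormEntropy (q := fun b => q (1, b)) fun b => hq _
  have key := tetrahedral_sum_le_four_mul_harmonic (w 2 + w 0) (w 2 - w 0) (w 1)
  obtain ⟨e₀₀, e₀₁, e₁₀, e₁₁⟩ : q (0, 0) = (w 2 + w 0 + w 1) ^ 2 ∧ q (0, 1) = (w 2 + w 0 - w 1) ^ 2 ∧
      q (1, 0) = (w 2 - w 0 - w 1) ^ 2 ∧ q (1, 1) = (w 2 - w 0 + w 1) ^ 2 := by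
    refine ⟨?_, ?_, ?_, ?_⟩ <;>
      simp only [hq_def, dotProduct, signPattern, Fin.sum_univ_three, cons_val_zero, cons_val_one,
        cons_val, Fin.val_zero, Fin.val_one, pow_zero, pow_one, Nat.reduceAdd, neg_one_sq] <;>
      ring
  rw [unnormEntropy_prod, Fin.sum_univ_two, Fintype.sum_prod_type]
  simp only [Fin.sum_univ_two] at hR h₀ h₁ ⊢
  simp only [e₀₀, e₀₁, e₁₀, e₁₁] at hR h₀ h₁ ⊢
  linarith [mul_le_mul_of_nonneg_left key (log_pos one_lt_two).le]

lemma Matrix.trace_conjTranspose_mul_self_mul_vecMulVec {m n R : Type*} [Fintype m] [Fintype n]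
    [CommRing R] [StarRing R] (B : Matrix m n R) (ψ : n → R) :
    (Bᴴ * B * vecMulVec ψ (star ψ)).trace = star (B *ᵥ ψ) ⬝ᵥ (B *ᵥ ψ) := by
  rw [mul_vecMulVec, trace_vecMulVec, dotProduct_comm, ← mulVec_mulVec, dotProduct_mulVec,
    star_mulVec]

lemma Complex.re_star_dotProduct_self {m : Type*} [Fintype m] (u : m → ℂ) :
    (star u ⬝ᵥ u).re = ∑ r, ((u r).re ^ 2 + (u r).im ^ 2) := by
  simp [dotProduct, Complex.re_sum, Complex.mul_re, sq]

lemma sigVec_eq_ofReal (a b c : ℝ) (j : Fin 2 × Fin 2) :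
    sigVec a b c j = fun l => ((signPattern j l * ![a, b, c] l : ℝ) : ℂ) := by
  ext l
  fin_cases l <;> simp [sigVec, signPattern]

lemma sigDM_eq_vecMulVec (a b c : ℝ) (j : Fin 2 × Fin 2) :
    sigDM a b c j = vecMulVec (sigVec a b c j) (star (sigVec a b c j)) :=
  rfl

open scoped MatrixOrder in
lemma re_trace_mul_sigDM_mem_entropyCone (a b c : ℝ) {M : Matrix (Fin 3) (Fin 3) ℂ}
    (hM : M.PosSemidef) :
    (fun j => (1 / 4 : ℝ) * ((M * sigDM a b c j).trace).re) ∈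
      entropyCone (Fin 2 × Fin 2) (log 2) := by
  obtain ⟨B, rfl⟩ := CStarAlgebra.nonneg_iff_eq_star_mul_self.mp hM.nonneg
  have hsum : (fun j => (1 / 4 : ℝ) * ((star B * B * sigDM a b c j).trace).re) =
      ∑ r, ((fun j => (signPattern j ⬝ᵥ fun l => (B r l).re * ![a, b, c] l / 2) ^ 2) +
        fun j => (signPattern j ⬝ᵥ fun l => (B r l).im * ![a, b, c] l / 2) ^ 2) := by
    ext j
    rw [sigDM_eq_vecMulVec, star_eq_conjTranspose, trace_conjTranspose_mul_self_mul_vecMulVec,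
      Complex.re_star_dotProduct_self, sigVec_eq_ofReal]
    simp only [mulVec, dotProduct, Fin.sum_univ_three, Complex.add_re, Complex.add_im,
      Complex.mul_re, Complex.mul_im, Complex.ofReal_re, Complex.ofReal_im, Finset.sum_apply,
      Pi.add_apply, cons_val_zero, cons_val_one, cons_val]
    ring
  rw [hsum]
  exact AddSubmonoid.sum_mem _ fun r _ =>
    add_mem (sq_signPattern_dotProduct_mem_entropyCone _)
      (sq_signPattern_dotProduct_mem_entropyCone _)

lemma trace_sigDM {a b c : ℝ} (habc : a ^ 2 + b ^ 2 + c ^ 2 = 1) (j : Fin 2 × Fin 2) :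
    (sigDM a b c j).trace = 1 := by
  have habc' : (a ^ 2 + b ^ 2 + c ^ 2 : ℂ) = 1 := by exact_mod_cast habc
  rw [sigDM_eq_vecMulVec, trace_vecMulVec, sigVec_eq_ofReal]
  obtain ⟨r, y⟩ := j
  fin_cases r <;> fin_cases y <;>
    simpa [dotProduct, Fin.sum_univ_three, signPattern, ← sq] using habc'

theorem stmt_19 (a b c : ℝ) (habc : a ^ 2 + b ^ 2 + c ^ 2 = 1) :
    -- Holevo quantity of the ensemble (each signal state is pure, so
    -- χ = S(ρ̄) for the diagonal average state ρ̄ = diag(a²,b²,c²)):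
    (-(a ^ 2 * Real.logb 2 (a ^ 2)) - b ^ 2 * Real.logb 2 (b ^ 2)
        - c ^ 2 * Real.logb 2 (c ^ 2) ≤ Real.logb 2 3) ∧
    -- accessible information: for any POVM {M k}, the mutual information
    -- I = H(J) + H(K) - H(J,K) between the uniform input (r,y) and the
    -- measurement outcome, with p(j,k) = (1/4)·Re Tr(M_k ρ_j), is ≤ 1 bit.
    ∀ (ι : Type) [Fintype ι] (M : ι → Matrix (Fin 3) (Fin 3) ℂ),
      (∀ k, (M k).PosSemidef) → (∑ k, M k) = 1 →
      ∀ p : Fin 2 × Fin 2 → ι → ℝ,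
        (∀ j k, p j k = (1 / 4 : ℝ) * ((M k * sigDM a b c j).trace).re) →
        shannonH (fun j => ∑ k, p j k) + shannonH (fun k => ∑ j, p j k)
            - shannonH (fun jk : (Fin 2 × Fin 2) × ι => p jk.1 jk.2) ≤ 1 := by
  refine ⟨?_, fun ι _ M hM hM₁ p hp => ?_⟩
  · have h := shannonH_le_logb_card ![a ^ 2, b ^ 2, c ^ 2]
      (fun i => by fin_cases i <;> simp [sq_nonneg]) (by simp [Fin.sum_univ_three, habc])
    simp only [shannonH, Fin.sum_univ_three, cons_val_zero, cons_val_one, cons_val,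
      Fintype.card_fin, Nat.succ_eq_add_one, Nat.reduceAdd, Nat.cast_ofNat] at h
    linarith
  have hrow : ∀ j, ∑ k, p j k = 4⁻¹ := fun j => by
    simp only [hp, ← Finset.mul_sum, ← Complex.re_sum, ← trace_sum, ← Finset.sum_mul, hM₁,
      one_mul, trace_sigDM habc]
    norm_num
  have hHJ : shannonH (fun j => ∑ k, p j k) = 2 := by
    have hlogb : logb 2 4 = 2 := by
      rw [show (4 : ℝ) = 2 ^ 2 by norm_num, logb_pow, logb_self_eq_one one_lt_two]; norm_num
    simp [shannonH, hrow, hlogb]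
  have hcond : ∀ k, log 2 * ∑ j, p j k ≤ unnormEntropy fun j => p j k := fun k => by
    simpa only [← hp] using (re_trace_mul_sigDM_mem_entropyCone a b c (hM k)).2
  have htotal : ∑ k, ∑ j, p j k = 1 := by
    rw [Finset.sum_comm]; simp [hrow]
  have hcondH : 1 ≤ shannonH (fun jk : (Fin 2 × Fin 2) × ι => p jk.1 jk.2) -
      shannonH (fun k => ∑ j, p j k) := by
    rw [shannonH_prod_sub_shannonH, le_div_iff₀ (log_pos one_lt_two), ← htotal, Finset.sum_mul]
    exact Finset.sum_le_sum fun k _ => by linarith [hcond k]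
  linarith
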